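/- Let n ≥ 3 and let f_{k,ℓ} = ((M')^{-1} N M')_{k,ℓ} with k > ℓ+1. Every variable x_{i,j} appearing in f_{k,ℓ} satisfies either i = n+1−k and j ≥ ℓ+1, or i > n+1−k; moreover the variable x_{n+1−k,ℓ+1} appears in exactly one term of f_{k,ℓ}, with coefficient −1. -/

import Mathlib

open MvPolynomial

/-- The generic antidiagonal-unipotent `n × n` matrix `M'` (the matrix `w₀M`):
indeterminates `x_{i,j}` above the antidiagonal, `1`'s on the antidiagonal,
`0`'s below. -/
noncomputable def genM (K : Type*) [Field K] (n : ℕ) :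
    Matrix (Fin n) (Fin n) (MvPolynomial (Fin n × Fin n) K) := fun i j =>
  if (i : ℕ) + (j : ℕ) < n - 1 then MvPolynomial.X (i, j)
  else if (i : ℕ) + (j : ℕ) = n - 1 then 1 else 0

/-- The regular nilpotent Jordan matrix `N`, with `1`'s on the superdiagonal. -/
noncomputable def nilpMat (K : Type*) [Field K] (n : ℕ) :
    Matrix (Fin n) (Fin n) (MvPolynomial (Fin n × Fin n) K) := fun i j =>
  if (j : ℕ) = (i : ℕ) + 1 then 1 else 0

/-- The matrix `(M')⁻¹ N M'`, whose `(k,ℓ)` entry is the polynomial `f_{k,ℓ}`. -/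
noncomputable def hessMat (K : Type*) [Field K] (n : ℕ) :
    Matrix (Fin n) (Fin n) (MvPolynomial (Fin n × Fin n) K) :=
  (genM K n)⁻¹ * nilpMat K n * genM K n

/-!
`M'` is unipotent up to the antidiagonal permutation, so it is invertible and `H = M'⁻¹ N M'`
is determined by `M' H = N M'`. Row `n-1-r` of this identity (0-indexed) expresses row `r` of `H`
through the earlier rows:
`H r c = (N M') (n-1-r) c - ∑_{a < r} x_{n-1-r,a} H a c`.
By induction on `r`, `H r c = 0` for `r ≤ c`, `H (c+1) c = 1`, and every variable of `H r c` lies in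
a row `≥ n-1-r`. For `r ≥ c+2` the summand `a = c+1` is exactly `x_{n-1-r,c+1}`; the other terms
only involve variables in rows `> n-1-r`, or in row `n-1-r` and columns `> c+1`.
-/

section MonomialExtraction

variable {R σ : Type*} [CommSemiring R]

lemma coeff_eq_zero_of_apply_ne_zero_of_notMem_vars {q : MvPolynomial σ R} {v : σ}
    (hq : v ∉ q.vars) {d : σ →₀ ℕ} (hd : d v ≠ 0) : coeff d q = 0 := by
  by_contra h
  exact hd (mem_support_notMem_vars_zero (mem_support_iff.2 h) hq)

variable {p q : MvPolynomial σ R} {a : R} {v : σ}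

lemma coeff_single_one_of_eq_C_mul_X_add (hp : p = C a * X v + q) (hq : v ∉ q.vars) :
    coeff (Finsupp.single v 1) p = a := by
  rw [hp, coeff_add, coeff_C_mul, coeff_X_same, mul_one,
    coeff_eq_zero_of_apply_ne_zero_of_notMem_vars hq (by simp), add_zero]

lemma existsUnique_mem_support_apply_ne_zero_of_eq_C_mul_X_add (hp : p = C a * X v + q)
    (hq : v ∉ q.vars) (ha : a ≠ 0) :
    ∃! d : σ →₀ ℕ, d ∈ p.support ∧ d v ≠ 0 := by
  classical
  refine ⟨Finsupp.single v 1, ⟨?_, by simp⟩, fun d ⟨hd, hdv⟩ => ?_⟩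
  · rwa [mem_support_iff, coeff_single_one_of_eq_C_mul_X_add hp hq]
  · rw [mem_support_iff, hp, coeff_add, coeff_eq_zero_of_apply_ne_zero_of_notMem_vars hq hdv,
      add_zero, coeff_C_mul, coeff_X] at hd
    by_contra hne
    exact hd (by rw [if_neg (Ne.symm hne), mul_zero])

end MonomialExtraction

section GenericMatrix

variable (K : Type*) [Field K] {n : ℕ}

lemma genM_apply_of_lt {i j : Fin n} (h : (i : ℕ) + j < n - 1) : genM K n i j = X (i, j) :=
  if_pos h

lemma genM_apply_of_eq {i j : Fin n} (h : (i : ℕ) + j = n - 1) : genM K n i j = 1 := by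
  rw [genM, if_neg (by omega), if_pos h]

lemma genM_apply_of_gt {i j : Fin n} (h : n - 1 < (i : ℕ) + j) : genM K n i j = 0 := by
  rw [genM, if_neg (by omega), if_neg (by omega)]

lemma genM_apply_mem_supported {s : Set (Fin n × Fin n)} {i j : Fin n} (h : (i, j) ∈ s) :
    genM K n i j ∈ supported K s := by
  unfold genM
  split_ifs
  exacts [X_mem_supported.2 h, one_mem _, zero_mem _]

lemma isUnit_det_genM : IsUnit (genM K n).det := by
  have h : ((genM K n).submatrix Fin.revPerm id).det = 1 := by
    rw [Matrix.det_of_isLowerTriangular]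
    · exact Finset.prod_eq_one fun i _ => genM_apply_of_eq K (by simp; omega)
    · intro i j hij
      rw [OrderDual.toDual_lt_toDual, Fin.lt_def] at hij
      exact genM_apply_of_gt K (by simp only [Fin.revPerm_apply, Fin.val_rev, id_eq]; omega)
  rw [Matrix.det_permute] at h
  exact IsUnit.of_mul_eq_one_right _ h

lemma genM_mul_hessMat : genM K n * hessMat K n = nilpMat K n * genM K n := by
  rw [hessMat, ← Matrix.mul_assoc, ← Matrix.mul_assoc,
    Matrix.mul_nonsing_inv _ (isUnit_det_genM K), Matrix.one_mul]

lemma nilpMat_mul_apply (A : Matrix (Fin n) (Fin n) (MvPolynomial (Fin n × Fin n) K))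
    (i c : Fin n) :
    (nilpMat K n * A) i c = if h : (i : ℕ) + 1 < n then A ⟨i + 1, h⟩ c else 0 := by
  rw [Matrix.mul_apply]
  split_ifs with h
  · rw [Fintype.sum_eq_single ⟨i + 1, h⟩ fun b hb => ?_]
    · simp [nilpMat]
    · rw [nilpMat, if_neg (fun hb' => hb (Fin.ext hb')), zero_mul]
  · exact Finset.sum_eq_zero fun b _ => by rw [nilpMat, if_neg (by omega), zero_mul]

lemma genM_mul_apply_rev (A : Matrix (Fin n) (Fin n) (MvPolynomial (Fin n × Fin n) K))
    (r c : Fin n) :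
    (genM K n * A) r.rev c = ∑ a ∈ Finset.univ.filter (· < r), X (r.rev, a) * A a c + A r c := by
  rw [Matrix.mul_apply, ← Finset.sum_filter_add_sum_filter_not Finset.univ (· < r)]
  congr 1
  · refine Finset.sum_congr rfl fun a ha => ?_
    rw [genM_apply_of_lt K (by simp only [Finset.mem_filter, Finset.mem_univ, true_and, Fin.lt_def, Fin.val_rev] at ha ⊢; omega)]
  · rw [Finset.sum_eq_single_of_mem r (by simp), genM_apply_of_eq K (by simp; omega), one_mul]
    intro a ha hne
    rw [genM_apply_of_gt K (by simp only [Finset.mem_filter, Finset.mem_univ, true_and, not_lt, Fin.lt_def, Fin.val_rev] at ha ⊢; omega), zero_mul]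

end GenericMatrix

section HessMat

variable (K : Type*) [Field K] {n : ℕ}

lemma hessMat_apply_eq_sub_sum (r c : Fin n) :
    hessMat K n r c = (nilpMat K n * genM K n) r.rev c
      - ∑ a ∈ Finset.univ.filter (· < r), X (r.rev, a) * hessMat K n a c := by
  rw [← genM_mul_hessMat, genM_mul_apply_rev, add_sub_cancel_left]

lemma hessMat_apply_eq_zero_of_le {r c : Fin n} (h : r ≤ c) : hessMat K n r c = 0 := by
  induction r using WellFoundedLT.induction with
  | _ r ih =>
  rw [hessMat_apply_eq_sub_sum, nilpMat_mul_apply,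
    Finset.sum_eq_zero fun a ha => by rw [ih a (Finset.mem_filter.1 ha).2 ((Finset.mem_filter.1 ha).2.le.trans h), mul_zero]]
  split_ifs
  · rw [genM_apply_of_gt K (by simp only [Fin.val_rev]; omega), sub_zero]
  · rw [sub_zero]

lemma hessMat_apply_succ_self (c : Fin n) (h : (c : ℕ) + 1 < n) :
    hessMat K n ⟨c + 1, h⟩ c = 1 := by
  rw [hessMat_apply_eq_sub_sum, nilpMat_mul_apply,
    Finset.sum_eq_zero fun a ha => by
      have hac : (a : ℕ) < c + 1 := Fin.lt_def.1 (Finset.mem_filter.1 ha).2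
      rw [hessMat_apply_eq_zero_of_le K (by omega), mul_zero],
    dif_pos (by simp; omega), genM_apply_of_eq K (by simp; omega), sub_zero]

lemma hessMat_apply_mem_supported (r c : Fin n) :
    hessMat K n r c ∈ supported K {v | (r.rev : ℕ) ≤ v.1} := by
  induction r using WellFoundedLT.induction with
  | _ r ih =>
  rw [hessMat_apply_eq_sub_sum, nilpMat_mul_apply]
  refine sub_mem ?_ (sum_mem fun a ha => mul_mem (X_mem_supported.2 (le_refl (r.rev : ℕ))) ?_)
  · split_ifs
    exacts [genM_apply_mem_supported K (by simp only [Set.mem_ofPred_eq, Fin.val_rev]; omega),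
      zero_mem _]
  · have har : (a : ℕ) < r := Fin.lt_def.1 (Finset.mem_filter.1 ha).2
    refine supported_mono (fun v hv => ?_) (ih a (Finset.mem_filter.1 ha).2)
    simp only [Set.mem_ofPred_eq, Fin.val_rev] at hv ⊢
    omega

lemma hessMat_apply_add_X_mem_supported {r c : Fin n} (h : (c : ℕ) + 1 < r) :
    hessMat K n r c + X (r.rev, ⟨c + 1, by omega⟩) ∈
      supported K {v | ((v.1 : ℕ) = r.rev ∧ (c : ℕ) + 1 < v.2) ∨ (r.rev : ℕ) < v.1} := by
  have hj : (⟨c + 1, by omega⟩ : Fin n) ∈ Finset.univ.filter (· < r) :=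
    Finset.mem_filter.2 ⟨Finset.mem_univ _, Fin.lt_def.2 h⟩
  rw [hessMat_apply_eq_sub_sum, ← Finset.add_sum_erase _ _ hj, hessMat_apply_succ_self, mul_one,
    sub_add_eq_sub_sub_swap, sub_add_cancel, nilpMat_mul_apply]
  refine sub_mem ?_ (sum_mem fun a ha => ?_)
  · split_ifs
    exacts [genM_apply_mem_supported K (by simp only [Set.mem_ofPred_eq, Fin.val_rev]; omega),
      zero_mem _]
  obtain ⟨hne, ha⟩ := Finset.mem_erase.1 ha
  by_cases hac : a ≤ c
  · rw [hessMat_apply_eq_zero_of_le K hac, mul_zero]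
    exact zero_mem _
  have har : (a : ℕ) < r := Fin.lt_def.1 (Finset.mem_filter.1 ha).2
  have hac' : (c : ℕ) + 1 < a := by
    have := Fin.val_ne_of_ne hne
    simp only [not_le, Fin.lt_def] at hac this
    omega
  refine mul_mem (X_mem_supported.2 (Or.inl ⟨rfl, hac'⟩))
    (supported_mono (fun v hv => ?_) (hessMat_apply_mem_supported K a c))
  simp only [Set.mem_ofPred_eq, Fin.val_rev] at hv ⊢
  omega

lemma hessMat_apply_mem_supported_of_lt {r c : Fin n} (h : (c : ℕ) + 1 < r) :
    hessMat K n r c ∈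
      supported K {v | ((v.1 : ℕ) = r.rev ∧ (c : ℕ) + 1 ≤ v.2) ∨ (r.rev : ℕ) < v.1} := by
  rw [← add_sub_cancel_right (hessMat K n r c) (X (r.rev, ⟨c + 1, by omega⟩))]
  refine sub_mem (supported_mono (fun v hv => ?_) (hessMat_apply_add_X_mem_supported K h))
    (X_mem_supported.2 (Or.inl ⟨rfl, le_rfl⟩))
  simp only [Set.mem_ofPred_eq] at hv ⊢
  omega

end HessMat

/-- Indices are 0-based: `f_{k,ℓ}` is the entry `(k - 1, l - 1)` and `x_{n+1-k,ℓ+1}` is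
`X (n - k, l)`. -/
theorem stmt8 {K : Type*} [Field K] {n : ℕ}
    (k l : ℕ) (hl1 : 1 ≤ l) (hlk : l + 1 < k) (hkn : k ≤ n) :
    (∀ d ∈ (hessMat K n ⟨k - 1, by omega⟩ ⟨l - 1, by omega⟩).support,
      ∀ v : Fin n × Fin n, d v ≠ 0 →
        ((v.1 : ℕ) = n - k ∧ l ≤ (v.2 : ℕ)) ∨ n - k < (v.1 : ℕ)) ∧
    (∃! d : (Fin n × Fin n) →₀ ℕ,
      d ∈ (hessMat K n ⟨k - 1, by omega⟩ ⟨l - 1, by omega⟩).support ∧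
        d ((⟨n - k, by omega⟩ : Fin n), (⟨l, by omega⟩ : Fin n)) ≠ 0) ∧
    MvPolynomial.coeff
      (Finsupp.single ((⟨n - k, by omega⟩ : Fin n), (⟨l, by omega⟩ : Fin n)) 1)
      (hessMat K n ⟨k - 1, by omega⟩ ⟨l - 1, by omega⟩) = -1 := by
  set r : Fin n := ⟨k - 1, by omega⟩
  set c : Fin n := ⟨l - 1, by omega⟩
  have hcr : (c : ℕ) + 1 < r := by simp only [r, c]; omega
  set x : Fin n × Fin n := (r.rev, ⟨c + 1, by omega⟩)
  have hx : ((⟨n - k, by omega⟩ : Fin n), (⟨l, by omega⟩ : Fin n)) = x := by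
    ext <;> simp only [x, r, c, Fin.val_rev] <;> omega
  rw [hx]
  have hq : x ∉ (hessMat K n r c + X x).vars := fun hmem => by
    simpa [x] using mem_supported.1 (hessMat_apply_add_X_mem_supported K hcr) hmem
  have hp : hessMat K n r c = C (-1) * X x + (hessMat K n r c + X x) := by
    rw [map_neg, map_one]; ring
  refine ⟨fun d hd v hdv => ?_, existsUnique_mem_support_apply_ne_zero_of_eq_C_mul_X_add hp hq
    (by norm_num), coeff_single_one_of_eq_C_mul_X_add hp hq⟩
  have hv := mem_supported.1 (hessMat_apply_mem_supported_of_lt K hcr)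
    ((mem_vars_iff_mem_support v).2 ⟨d, hd, Finsupp.mem_support_iff.2 hdv⟩)
  simp only [r, c, Set.mem_ofPred_eq, Fin.val_rev] at hv
  omega
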